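/- Let T be a positive contraction on ℓ_2 such that ‖T‖ = 1 and there exists a family (u_r)_{r∈J} of norming vectors for T, indexed by a set J ⊆ ℤ₊, with u_r positive, ‖u_r‖ = 1 for every r ∈ J, and ⋃_{r∈J} Supp(u_r) = ℤ₊. Then T is a point of continuity of the identity map from (𝒫₁(ℓ_2), WOT) to (𝒫₁(ℓ_2), SOT). -/

import Mathlib

open scoped ENNReal

noncomputable section

/-- The Hilbert space `ℓ₂` of square-summable complex sequences. -/
abbrev L2 := lp (fun _ : ℕ => ℂ) 2

/-- A vector of `ℓ₂` is positive if all its coordinates are nonnegative reals. -/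
def PosVec (x : L2) : Prop := ∀ n : ℕ, 0 ≤ (x n).re ∧ (x n).im = 0

/-- The set `𝒫₁(ℓ₂)` of positive contractions on `ℓ₂`. -/
def P1 : Set (L2 →L[ℂ] L2) :=
  {T | (∀ x : L2, PosVec x → PosVec (T x)) ∧ ‖T‖ ≤ 1}

/-- The strong operator topology (pointwise norm-convergence). -/
def sot : TopologicalSpace (L2 →L[ℂ] L2) :=
  TopologicalSpace.induced (fun T => (fun x : L2 => T x)) Pi.topologicalSpace

/-- The weak operator topology (pointwise weak convergence). -/
def wot : TopologicalSpace (L2 →L[ℂ] L2) :=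
  TopologicalSpace.induced
    (fun T => (fun q : L2 × L2 => (inner ℂ q.1 (T q.2) : ℂ)))
    Pi.topologicalSpace

/-- The dual strong operator topology `SOT_*` (pointwise norm-convergence of the adjoints). -/
def sotStar : TopologicalSpace (L2 →L[ℂ] L2) :=
  TopologicalSpace.induced
    (fun T => (fun x : L2 => (ContinuousLinearMap.adjoint T) x))
    Pi.topologicalSpace

/-- The `SOT*` topology, the join of `SOT` and `SOT_*`.  (In the order on
`TopologicalSpace`, `⊓` is the coarsest topology refining both.) -/
def sotSStar : TopologicalSpace (L2 →L[ℂ] L2) := sot ⊓ sotStar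

/-- Restriction of a topology to a subset. -/
def rtop {α : Type*} (s : Set α) (t : TopologicalSpace α) : TopologicalSpace ↥s :=
  t.induced Subtype.val

/-- Two topologies on the same set are similar if they have the same dense sets. -/
def SimilarTop {Y : Type*} (t t' : TopologicalSpace Y) : Prop :=
  ∀ A : Set Y, @Dense Y t A ↔ @Dense Y t' A

/-!
On a norming vector `u` of `T`, WOT convergence `S → T` inside `𝒫₁(ℓ₂)` is already norm
convergence: `‖S u‖ ≤ ‖u‖ = ‖T u‖` gives `‖S u - T u‖² ≤ 2 Re ⟪T u, T u - S u⟫ → 0`.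
Positivity of `S` dominates `S (u n • e n)` coordinatewise by `S u`, and in `ℓ₂` a family that
converges coordinatewise and is dominated by a norm-convergent family converges in norm; as the
supports of the `u r` cover `ℕ`, this yields `S (e n) → T (e n)` for every `n`. Finally, the `S`
being uniformly bounded, the vectors `x` with `S x → T x` form a closed subspace, and it contains
the basis.
-/

open Filter Topology
open scoped ComplexOrder

section InnerProductSpace

variable {𝕜 E : Type*} [RCLike 𝕜] [NormedAddCommGroup E] [InnerProductSpace 𝕜 E]

open RCLike in
theorem norm_sub_sq_le_two_mul_re_inner_sub {x y : E} (h : ‖x‖ ≤ ‖y‖) :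
    ‖x - y‖ ^ 2 ≤ 2 * re (inner 𝕜 y (y - x)) := by
  rw [norm_sub_sq (𝕜 := 𝕜), inner_sub_right, map_sub, inner_self_eq_norm_sq (𝕜 := 𝕜),
    ← inner_conj_symm, conj_re]
  nlinarith [norm_nonneg x]

theorem tendsto_of_tendsto_inner_of_norm_le {ι : Type*} {l : Filter ι} {x : ι → E} {y : E}
    (hnorm : ∀ i, ‖x i‖ ≤ ‖y‖) (hinner : Tendsto (fun i => inner 𝕜 y (x i)) l (𝓝 (inner 𝕜 y y))) :
    Tendsto x l (𝓝 y) := by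
  have hre : Tendsto (fun i => 2 * RCLike.re (inner 𝕜 y (y - x i))) l (𝓝 0) := by
    simpa [inner_sub_right] using
      ((RCLike.continuous_re.tendsto _).comp
        ((tendsto_const_nhds (x := inner 𝕜 y y)).sub hinner)).const_mul 2
  have hsq : Tendsto (fun i => ‖x i - y‖ ^ 2) l (𝓝 0) :=
    squeeze_zero (fun _ => by positivity)
      (fun i => norm_sub_sq_le_two_mul_re_inner_sub (hnorm i)) hre
  rw [tendsto_iff_norm_sub_tendsto_zero]
  simpa [Function.comp_def, Real.sqrt_sq (norm_nonneg _)] using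
    (Real.continuous_sqrt.tendsto 0).comp hsq

end InnerProductSpace

namespace ContinuousLinearMap

variable {𝕜 E F ι : Type*} [NontriviallyNormedField 𝕜] [SeminormedAddCommGroup E]
  [SeminormedAddCommGroup F] [NormedSpace 𝕜 E] [NormedSpace 𝕜 F]

def tendstoSubmodule (l : Filter ι) (f : ι → E →L[𝕜] F) (g : E →L[𝕜] F) : Submodule 𝕜 E where
  carrier := {x | Tendsto (fun i => f i x) l (𝓝 (g x))}
  zero_mem' := by simpa using tendsto_const_nhds
  add_mem' hx hy := by simpa using hx.add hy
  smul_mem' c _ hx := by simpa using hx.const_smul c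

theorem isClosed_tendstoSubmodule {l : Filter ι} {f : ι → E →L[𝕜] F} (g : E →L[𝕜] F) {C : ℝ}
    (hf : ∀ i, ‖f i‖ ≤ C) : IsClosed (tendstoSubmodule l f g : Set E) := by
  have hequi : Equicontinuous ((↑) ∘ f : ι → E → F) :=
    ((NormedSpace.equicontinuous_TFAE f).out 5 1).mp (⟨C, hf⟩ : ∃ C, ∀ i, ‖f i‖ ≤ C)
  exact hequi.isClosed_setOfPred_tendsto g.continuous

end ContinuousLinearMap

namespace lp

variable {α : Type*} {E : α → Type*} [∀ a, NormedAddCommGroup (E a)] {p : ℝ≥0∞}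

theorem sub_sum_single_apply [DecidableEq α] (f : lp E p) (s : Finset α) (a : α) :
    (f - ∑ b ∈ s, lp.single p b (f b)) a = if a ∈ s then 0 else f a := by
  simp only [coeFn_sub, coeFn_sum, lp.coeFn_single, Pi.sub_apply, Finset.sum_apply,
    Finset.sum_pi_single]
  split_ifs <;> simp

variable [Fact (1 ≤ p)]

theorem tendsto_sum_single_of_tendsto_apply [DecidableEq α] {ι : Type*} {l : Filter ι}
    {x : ι → lp E p} {x₀ : lp E p} (hx : ∀ a, Tendsto (fun i => x i a) l (𝓝 (x₀ a)))
    (s : Finset α) :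
    Tendsto (fun i => ∑ b ∈ s, lp.single p b (x i b)) l (𝓝 (∑ b ∈ s, lp.single p b (x₀ b))) :=
  tendsto_finsetSum s fun b _ => ((isometry_single b).continuous.tendsto _).comp (hx b)

theorem tendsto_apply_of_tendsto {ι : Type*} {l : Filter ι} {x : ι → lp E p} {x₀ : lp E p}
    (hx : Tendsto x l (𝓝 x₀)) (a : α) : Tendsto (fun i => x i a) l (𝓝 (x₀ a)) :=
  tendsto_pi_nhds.1 ((uniformContinuous_coe.continuous.tendsto x₀).comp hx) a

theorem tendsto_of_tendsto_apply_of_norm_apply_le (hp : p ≠ ⊤) {ι : Type*} {l : Filter ι}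
    {x y : ι → lp E p} {x₀ y₀ : lp E p} (hx : ∀ a, Tendsto (fun i => x i a) l (𝓝 (x₀ a)))
    (hy : Tendsto y l (𝓝 y₀)) (hle : ∀ i a, ‖x i a‖ ≤ ‖y i a‖) : Tendsto x l (𝓝 x₀) := by
  classical
  set P : Finset α → lp E p → lp E p := fun s f => ∑ b ∈ s, lp.single p b (f b)
  have htail : ∀ f : lp E p, Tendsto (fun s => ‖f - P s f‖) atTop (𝓝 0) := fun f => by
    simpa [P, norm_sub_rev] using (tendsto_iff_norm_sub_tendsto_zero.1 (lp.hasSum_single hp f))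
  rw [Metric.tendsto_nhds]
  intro ε hε
  obtain ⟨s, hxs, hys⟩ : ∃ s, ‖x₀ - P s x₀‖ < ε / 3 ∧ ‖y₀ - P s y₀‖ < ε / 3 :=
    (((htail x₀).eventually (gt_mem_nhds (by positivity))).and
      ((htail y₀).eventually (gt_mem_nhds (by positivity)))).exists
  have hPx := tendsto_sum_single_of_tendsto_apply hx s
  have hQy : Tendsto (fun i => ‖y i - P s (y i)‖) l (𝓝 ‖y₀ - P s y₀‖) :=
    (hy.sub (tendsto_sum_single_of_tendsto_apply (tendsto_apply_of_tendsto hy) s)).norm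
  filter_upwards [(Metric.tendsto_nhds.1 hPx) (ε / 3) (by positivity),
    hQy.eventually (gt_mem_nhds hys)] with i hPi hQi
  have hQx : ‖x i - P s (x i)‖ ≤ ‖y i - P s (y i)‖ :=
    norm_mono (zero_lt_one.trans_le Fact.out).ne' fun a => by
      simp only [P, sub_sum_single_apply]
      split_ifs
      · simp
      · exact hle i a
  rw [dist_eq_norm] at hPi ⊢
  calc ‖x i - x₀‖ = ‖(P s (x i) - P s x₀) + (x i - P s (x i)) - (x₀ - P s x₀)‖ := by abel_nf
    _ ≤ ‖P s (x i) - P s x₀‖ + ‖x i - P s (x i)‖ + ‖x₀ - P s x₀‖ :=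
      norm_sub_le_of_le (norm_add_le _ _) le_rfl
    _ < ε := by linarith

theorem submodule_eq_top_of_isClosed {𝕜 : Type*} [NormedRing 𝕜] [∀ a, Module 𝕜 (E a)]
    [∀ a, IsBoundedSMul 𝕜 (E a)] [DecidableEq α] (hp : p ≠ ⊤) {V : Submodule 𝕜 (lp E p)}
    (hV : IsClosed (V : Set (lp E p))) (hsingle : ∀ a c, lp.single p a c ∈ V) : V = ⊤ :=
  V.eq_top_iff'.2 fun f => hV.mem_of_tendsto (lp.hasSum_single hp f)
    (Eventually.of_forall fun _ => V.sum_mem fun a _ => hsingle a (f a))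

end lp

theorem tendsto_rtop_sot_iff {β : Type*} {s : Set (L2 →L[ℂ] L2)} {l : Filter β} {f : β → s}
    {T : s} :
    Tendsto f l (@nhds s (rtop s sot) T) ↔
      ∀ x, Tendsto (fun b => (f b : L2 →L[ℂ] L2) x) l (𝓝 ((T : L2 →L[ℂ] L2) x)) := by
  rw [rtop, sot, induced_compose, nhds_induced, tendsto_comap_iff, tendsto_pi_nhds]
  rfl

theorem tendsto_rtop_wot_iff {β : Type*} {s : Set (L2 →L[ℂ] L2)} {l : Filter β} {f : β → s}
    {T : s} :
    Tendsto f l (@nhds s (rtop s wot) T) ↔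
      ∀ x y, Tendsto (fun b => inner ℂ x ((f b : L2 →L[ℂ] L2) y)) l
        (𝓝 (inner ℂ x ((T : L2 →L[ℂ] L2) y))) := by
  rw [rtop, wot, induced_compose, nhds_induced, tendsto_comap_iff, tendsto_pi_nhds, Prod.forall]
  rfl

theorem posVec_iff {x : L2} : PosVec x ↔ ∀ n, (0 : ℂ) ≤ x n := by
  simp [PosVec, Complex.nonneg_iff, eq_comm]

theorem PosVec.norm_apply_le_add {x y : L2} (hx : PosVec x) (hy : PosVec y) (n : ℕ) :
    ‖x n‖ ≤ ‖(x + y) n‖ := by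
  rw [posVec_iff] at hx hy
  exact CStarAlgebra.norm_le_norm_of_nonneg_of_le (hx n) (le_add_of_nonneg_right (hy n))

theorem PosVec.single {u : L2} (hu : PosVec u) (n : ℕ) : PosVec (lp.single 2 n (u n)) := by
  rw [posVec_iff] at hu ⊢
  intro m
  rw [lp.single_apply, Pi.single_apply]
  split_ifs with h
  · exact h ▸ hu m
  · exact le_rfl

theorem PosVec.sub_single {u : L2} (hu : PosVec u) (n : ℕ) :
    PosVec (u - lp.single 2 n (u n)) := by
  rw [posVec_iff] at hu ⊢
  intro m
  rw [lp.coeFn_sub, Pi.sub_apply, lp.single_apply, Pi.single_apply]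
  split_ifs with h
  · simp [h]
  · simpa using hu m

theorem norm_map_single_apply_le {S : L2 →L[ℂ] L2} (hS : ∀ x, PosVec x → PosVec (S x)) {u : L2}
    (hu : PosVec u) (n m : ℕ) : ‖S (lp.single 2 n (u n)) m‖ ≤ ‖S u m‖ := by
  simpa [← map_add] using
    (hS _ (hu.single n)).norm_apply_le_add (hS _ (hu.sub_single n)) m

theorem norming_family_implies_continuity_point_wot_sot_general (T : ↥P1)
    (hTnorm : ‖(T : L2 →L[ℂ] L2)‖ = 1)
    (J : Set ℕ) (u : ℕ → L2)
    (hpos : ∀ r ∈ J, PosVec (u r))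
    (hnorming : ∀ r ∈ J,
      ‖(T : L2 →L[ℂ] L2) (u r)‖ = ‖(T : L2 →L[ℂ] L2)‖ * ‖u r‖)
    (hcover : ∀ n : ℕ, ∃ r ∈ J, u r n ≠ 0) :
    @ContinuousAt ↥P1 ↥P1 (rtop P1 wot) (rtop P1 sot) id T := by
  set F := @nhds _ (rtop P1 wot) T
  have hweak := tendsto_rtop_wot_iff.1 (tendsto_id (x := F))
  have hcoord : ∀ x n, Tendsto (fun S : P1 => (S : L2 →L[ℂ] L2) x n) F
      (𝓝 ((T : L2 →L[ℂ] L2) x n)) := fun x n => by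
    simpa [lp.inner_single_left] using hweak (lp.single 2 n 1) x
  have hnorming_tendsto : ∀ r ∈ J, Tendsto (fun S : P1 => (S : L2 →L[ℂ] L2) (u r)) F
      (𝓝 ((T : L2 →L[ℂ] L2) (u r))) := by
    intro r hr
    refine tendsto_of_tendsto_inner_of_norm_le (fun S => ?_) (hweak _ _)
    calc ‖(S : L2 →L[ℂ] L2) (u r)‖ ≤ 1 * ‖u r‖ := S.1.le_of_opNorm_le S.2.2 (u r)
      _ = ‖(T : L2 →L[ℂ] L2) (u r)‖ := by rw [hnorming r hr, hTnorm]
  set V := ContinuousLinearMap.tendstoSubmodule F (fun S : P1 => (S : L2 →L[ℂ] L2)) T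
  have hsingle : ∀ n c, lp.single 2 n c ∈ V := by
    intro n c
    obtain ⟨r, hr, hrn⟩ := hcover n
    have hn : lp.single 2 n (u r n) ∈ V :=
      lp.tendsto_of_tendsto_apply_of_norm_apply_le ENNReal.ofNat_ne_top (hcoord _)
        (hnorming_tendsto r hr) fun S => norm_map_single_apply_le S.2.1 (hpos r hr) n
    simpa [← lp.single_smul, hrn] using V.smul_mem (c / u r n) hn
  have hV : V = ⊤ := lp.submodule_eq_top_of_isClosed ENNReal.ofNat_ne_top
    (ContinuousLinearMap.isClosed_tendstoSubmodule _ fun S => S.2.2) hsingle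
  exact tendsto_rtop_sot_iff.2 fun x => (hV ▸ Submodule.mem_top : x ∈ V)

/-- Let `T` be a positive contraction on `ℓ₂` with `‖T‖ = 1` such that
there exists a family `(u_r)_{r ∈ J}` (indexed by `J ⊆ ℤ₊`) of norming vectors for `T`,
each positive and of norm `1`, whose supports cover `ℤ₊`.  Then `T` is a point of
continuity of the identity map from `(𝒫₁(ℓ₂), WOT)` to `(𝒫₁(ℓ₂), SOT)`. -/
theorem norming_family_implies_continuity_point_wot_sot (T : ↥P1)
    (hTnorm : ‖(T : L2 →L[ℂ] L2)‖ = 1)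
    (J : Set ℕ) (u : ℕ → L2)
    (hpos : ∀ r ∈ J, PosVec (u r))
    (hunit : ∀ r ∈ J, ‖u r‖ = 1)
    (hnorming : ∀ r ∈ J,
      ‖(T : L2 →L[ℂ] L2) (u r)‖ = ‖(T : L2 →L[ℂ] L2)‖ * ‖u r‖)
    (hcover : ∀ n : ℕ, ∃ r ∈ J, u r n ≠ 0) :
    @ContinuousAt ↥P1 ↥P1 (rtop P1 wot) (rtop P1 sot) id T :=
  norming_family_implies_continuity_point_wot_sot_general T hTnorm J u hpos hnorming hcover
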